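/- Let G be a finite simple graph and let k ≥ 3. Let G' be the graph obtained from G by adding two new vertices x and y adjacent to each other and to every vertex of G. Let H be the split graph whose vertex set is V(G') together with one new vertex I_e for each edge e of G', whose clique is V(G') (all pairs of vertices of G' adjacent in H), and in which each vertex I_{uv} is adjacent exactly to u and v. Then G has a proper k-coloring if and only if H admits a conflict-free open neighborhood coloring with k + 2 colors. -/

import Mathlib

/-- A coloring `c` is a conflict-free open neighborhood (CF-ON) coloring of `H` if
for every vertex `v` there is some color assigned to exactly one vertex of the
open neighborhood `N(v)`. -/
def IsCFON {W S : Type*} (H : SimpleGraph W) (c : W → S) : Prop :=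
  ∀ v : W, ∃ a : S, ∃! u : W, H.Adj v u ∧ c u = a

/-- The graph `G'` obtained from `G` by adding two new vertices `x`, `y` (encoded as
`Sum.inr 0` and `Sum.inr 1`) adjacent to each other and to every vertex of `G`. -/
def addTwoUniversal {V : Type*} (G : SimpleGraph V) : SimpleGraph (V ⊕ Fin 2) :=
  SimpleGraph.fromRel (fun a b =>
    (∃ u v : V, a = Sum.inl u ∧ b = Sum.inl v ∧ G.Adj u v) ∨ (∃ i : Fin 2, b = Sum.inr i))

/-- The split graph `H` built from `G' = addTwoUniversal G`: its vertices are the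
vertices of `G'` together with one new vertex `I_e` for every edge `e` of `G'`; the
vertices of `G'` form a clique, each `I_e` is adjacent exactly to the two endpoints
of `e`, and the vertices `I_e` form an independent set. -/
def splitGadget {V : Type*} (G : SimpleGraph V) :
    SimpleGraph ((V ⊕ Fin 2) ⊕ ↥(addTwoUniversal G).edgeSet) :=
  SimpleGraph.fromRel (fun a b =>
    (∃ w w' : V ⊕ Fin 2, a = Sum.inl w ∧ b = Sum.inl w') ∨
    (∃ (w : V ⊕ Fin 2) (e : ↥(addTwoUniversal G).edgeSet),
      a = Sum.inl w ∧ b = Sum.inr e ∧ w ∈ (e : Sym2 (V ⊕ Fin 2))))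

/-! The vertex `I_{uv}` sees only `u` and `v`, so a CF-ON coloring of the split graph restricts
to a proper coloring of `G'`, in which the universal vertices `x` and `y` take two colors used
nowhere else; the remaining `k` colors properly color `G`. Conversely, give `x` and `y` two fresh
colors on top of a proper `k`-coloring of `G`, and every `I_e` one of the `k` old colors: then
`I_e` sees its two differently colored endpoints, and every vertex of `G'` sees the color of `x`
or of `y` exactly once. -/

open SimpleGraph Function

section CFON
variable {W S : Type*} {H : SimpleGraph W} {c : W → S}

theorem IsCFON.comp_injective {T : Type*} {f : S → T} (hc : IsCFON H c) (hf : Injective f) :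
    IsCFON H (f ∘ c) := by
  intro v
  obtain ⟨a, u, ⟨hvu, hua⟩, huniq⟩ := hc v
  exact ⟨f a, u, ⟨hvu, congrArg f hua⟩, fun z hz => huniq z ⟨hz.1, hf hz.2⟩⟩

theorem IsCFON.ne_of_adj_iff_eq_or_eq (hc : IsCFON H c) {v u w : W} (huw : u ≠ w)
    (hN : ∀ z, H.Adj v z ↔ z = u ∨ z = w) : c u ≠ c w := by
  intro hcuw
  obtain ⟨a, z, ⟨hvz, rfl⟩, huniq⟩ := hc v
  have hz : c z = c u := by rcases (hN z).1 hvz with rfl | rfl <;> simp [hcuw]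
  exact huw ((huniq u ⟨(hN u).2 (Or.inl rfl), hz.symm⟩).trans
    (huniq w ⟨(hN w).2 (Or.inr rfl), (hz.trans hcuw).symm⟩).symm)

end CFON

section Gadget
variable {V : Type*} {G : SimpleGraph V}

@[simp]
theorem addTwoUniversal_adj_inl_inl {u v : V} :
    (addTwoUniversal G).Adj (.inl u) (.inl v) ↔ G.Adj u v := by
  simpa [addTwoUniversal, G.adj_comm v u] using @Adj.ne _ G u v

@[simp]
theorem addTwoUniversal_adj_inr_inr {i j : Fin 2} :
    (addTwoUniversal G).Adj (.inr i) (.inr j) ↔ i ≠ j := by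
  simp [addTwoUniversal, -Fin.exists_fin_two]

theorem addTwoUniversal_adj_inr {w : V ⊕ Fin 2} {i : Fin 2} :
    (addTwoUniversal G).Adj w (.inr i) ↔ w ≠ .inr i := by
  simp [addTwoUniversal, -Fin.exists_fin_two]

@[simp]
theorem splitGadget_adj_inl_inl {w w' : V ⊕ Fin 2} :
    (splitGadget G).Adj (.inl w) (.inl w') ↔ w ≠ w' := by
  simp [splitGadget, -Sum.exists]

@[simp]
theorem splitGadget_adj_inl_inr {w : V ⊕ Fin 2} {e : (addTwoUniversal G).edgeSet} :
    (splitGadget G).Adj (.inl w) (.inr e) ↔ w ∈ (e : Sym2 (V ⊕ Fin 2)) := by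
  simp [splitGadget, -Sum.exists]

@[simp]
theorem splitGadget_adj_inr_inl {w : V ⊕ Fin 2} {e : (addTwoUniversal G).edgeSet} :
    (splitGadget G).Adj (.inr e) (.inl w) ↔ w ∈ (e : Sym2 (V ⊕ Fin 2)) := by
  simp [splitGadget, -Sum.exists]

@[simp]
theorem splitGadget_not_adj_inr_inr {e e' : (addTwoUniversal G).edgeSet} :
    ¬(splitGadget G).Adj (.inr e) (.inr e') := by
  simp [splitGadget, -Sum.exists]

def SimpleGraph.Coloring.addTwoUniversal {α : Type*} (C : G.Coloring α) :
    (addTwoUniversal G).Coloring (α ⊕ Fin 2) :=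
  Coloring.mk (Sum.map C id) fun {w w'} h => by
    cases w <;> cases w' <;> simp_all [C.valid]

@[simp]
theorem SimpleGraph.Coloring.addTwoUniversal_apply {α : Type*} (C : G.Coloring α)
    (w : V ⊕ Fin 2) : C.addTwoUniversal w = Sum.map C id w :=
  rfl

theorem SimpleGraph.Colorable.of_addTwoUniversal {n : ℕ}
    (h : (addTwoUniversal G).Colorable (n + 2)) : G.Colorable n := by
  obtain ⟨C⟩ := h
  have hxy : C (.inr 0) ≠ C (.inr 1) := C.valid (by simp)
  let S : Finset (Fin (n + 2)) := {C (.inr 0), C (.inr 1)}ᶜ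
  have hS : S.card = n := by rw [Finset.card_compl, Finset.card_pair hxy]; simp
  have hmem (v : V) : C (.inl v) ∈ S := by
    simp [S, C.valid (addTwoUniversal_adj_inr.2 Sum.inl_ne_inr)]
  let C' : G.Coloring S := Coloring.mk (fun v => ⟨C (.inl v), hmem v⟩) fun h heq =>
    C.valid (addTwoUniversal_adj_inl_inl.2 h) (congrArg Subtype.val heq)
  simpa [hS] using C'.colorable

theorem IsCFON.ne_of_addTwoUniversal_adj {S : Type*}
    {c : (V ⊕ Fin 2) ⊕ (addTwoUniversal G).edgeSet → S} (hc : IsCFON (splitGadget G) c)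
    {w w' : V ⊕ Fin 2} (h : (addTwoUniversal G).Adj w w') :
    c (.inl w) ≠ c (.inl w') :=
  hc.ne_of_adj_iff_eq_or_eq (v := .inr ⟨s(w, w'), h⟩) (by simpa using h.ne) fun z => by
    cases z <;> simp [eq_comm]

theorem isCFON_splitGadget_sumElim {α : Type*} (C : (addTwoUniversal G).Coloring α) {a : α}
    (ha : ∀ i, a ≠ C (.inr i)) : IsCFON (splitGadget G) (Sum.elim C fun _ => a) := by
  rintro (w | ⟨⟨w, w'⟩, he⟩)
  · -- `w` sees a universal vertex `inr i ≠ w` exactly once: its color is used neither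
    -- elsewhere in `G'` (all of which is adjacent to it) nor on the edge vertices.
    obtain ⟨i, hwi⟩ : ∃ i : Fin 2, w ≠ .inr i := by
      rcases w with v | j
      · exact ⟨0, Sum.inl_ne_inr⟩
      · exact ⟨j + 1, by fin_cases j <;> simp⟩
    refine ⟨C (.inr i), .inl (.inr i), ⟨by simpa using hwi, rfl⟩, ?_⟩
    rintro (z | e) ⟨hz, hcz⟩
    · by_contra hzi
      exact C.valid (addTwoUniversal_adj_inr.2 fun h => hzi (h ▸ rfl)) hcz
    · exact absurd hcz (ha i)
  · refine ⟨C w, .inl w, ⟨by simp, rfl⟩, ?_⟩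
    rintro (z | e) ⟨hz, hcz⟩
    · simp only [splitGadget_adj_inr_inl, Sym2.mem_iff] at hz
      rcases hz with rfl | rfl
      · rfl
      · exact absurd hcz (C.valid he).symm
    · simp at hz

end Gadget

theorem proper_coloring_iff_cfon_split_general {V : Type*}
    (G : SimpleGraph V) (k : ℕ) (hk : 3 ≤ k) :
    (∃ c : V → Fin k, ∀ u v : V, G.Adj u v → c u ≠ c v) ↔
      (∃ c : (V ⊕ Fin 2) ⊕ ↥(addTwoUniversal G).edgeSet → Fin (k + 2),
        IsCFON (splitGadget G) c) := by
  have hcolorable : (∃ c : V → Fin k, ∀ u v : V, G.Adj u v → c u ≠ c v) ↔ G.Colorable k :=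
    ⟨fun ⟨c, hc⟩ => ⟨Coloring.mk c (hc _ _)⟩, fun ⟨C⟩ => ⟨C, fun _ _ => C.valid⟩⟩
  rw [hcolorable]
  constructor
  · rintro ⟨C⟩
    have hc := isCFON_splitGadget_sumElim C.addTwoUniversal (a := .inl ⟨0, by omega⟩) (by simp)
    exact ⟨_, hc.comp_injective finSumFinEquiv.injective⟩
  · rintro ⟨c, hc⟩
    exact .of_addTwoUniversal ⟨Coloring.mk (c ∘ .inl) hc.ne_of_addTwoUniversal_adj⟩

/-- For `k ≥ 3`, a graph `G` has a proper `k`-coloring if and only if the split graph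
`splitGadget G` has a CF-ON coloring with `k + 2` colors. -/
theorem proper_coloring_iff_cfon_split {V : Type*} [Fintype V] [DecidableEq V]
    (G : SimpleGraph V) (k : ℕ) (hk : 3 ≤ k) :
    (∃ c : V → Fin k, ∀ u v : V, G.Adj u v → c u ≠ c v) ↔
      (∃ c : (V ⊕ Fin 2) ⊕ ↥(addTwoUniversal G).edgeSet → Fin (k + 2),
        IsCFON (splitGadget G) c) :=
  proper_coloring_iff_cfon_split_general G k hk
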